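/- Let n ≥ 3 and suppose the parities of d(1),...,d(n) include at least two odd values and at least one even value. Then there exist σ, τ ∈ S_n with κ(στ, e) ≠ κ(σ, e)·κ(τ, e); i.e., κ(-, e) is not a group homomorphism. -/

import Mathlib

/-- The Koszul sign map property: `κ σ ρ` is the Koszul sign of correcting the
permuted sequence `g = ρ(f)` (i.e. `g i = f (ρ⁻¹ i)`) by `σ`, with degrees `d`. -/
def IsKoszul {n : ℕ} (d : Fin n → ℤ)
    (κ : Equiv.Perm (Fin n) → Equiv.Perm (Fin n) → ℤˣ) : Prop :=
  (∀ σ τ ρ, κ (σ * τ) ρ = κ σ (τ * ρ) * κ τ ρ) ∧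
  (∀ (i : ℕ) (h : i + 1 < n) (ρ : Equiv.Perm (Fin n)),
    κ (Equiv.swap ⟨i, Nat.lt_of_succ_lt h⟩ ⟨i + 1, h⟩) ρ =
      (-1 : ℤˣ) ^ (d (ρ⁻¹ ⟨i, Nat.lt_of_succ_lt h⟩) * d (ρ⁻¹ ⟨i + 1, h⟩)))

/-!
Since `κ (σ * τ) 1 = κ σ τ * κ τ 1`, multiplicativity of `κ (-, 1)` would force `κ σ τ = κ σ 1`
for all `σ, τ`. For the transposition `s₀ = (0 1)` the sign `κ s₀ ρ` is governed by the parity of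
`d (ρ⁻¹ 0) * d (ρ⁻¹ 1)`, and the mixed parities of `d` let `ρ` place either an odd-odd pair or an
odd-even pair at the positions `0, 1`, so that parity can be flipped.
-/

open Equiv

theorem units_neg_one_zpow_eq_iff {a b : ℤ} :
    (-1 : ℤˣ) ^ a = (-1) ^ b ↔ (Even a ↔ Even b) := by
  rw [neg_one_zpow_eq_ite, neg_one_zpow_eq_ite]
  split_ifs <;> simp_all [units_ne_neg_self, neg_units_ne_self, ← Int.not_odd_iff_even]

theorem exists_ne_even_mul_iff_not {ι : Type*} {d : ι → ℤ}
    (hodd : ∃ i j, i ≠ j ∧ Odd (d i) ∧ Odd (d j)) (heven : ∃ k, Even (d k)) (a b : ι) :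
    ∃ x y, x ≠ y ∧ (Even (d x * d y) ↔ ¬ Even (d a * d b)) := by
  obtain ⟨i, j, hij, hi, hj⟩ := hodd
  obtain ⟨k, hk⟩ := heven
  by_cases hab : Even (d a * d b)
  · refine ⟨i, j, hij, ?_⟩
    simp [hab, Int.even_mul, Int.not_even_iff_odd.mpr hi, Int.not_even_iff_odd.mpr hj]
  · have hik : i ≠ k := by
      rintro rfl
      exact Int.not_even_iff_odd.mpr hi hk
    exact ⟨i, k, hik, iff_of_true (hk.mul_left _) hab⟩

namespace IsKoszul

variable {n : ℕ} {d : Fin n → ℤ} {κ : Perm (Fin n) → Perm (Fin n) → ℤˣ}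

theorem apply_mul_one (hκ : IsKoszul d κ) (σ τ : Perm (Fin n)) :
    κ (σ * τ) 1 = κ σ τ * κ τ 1 := by
  simpa using hκ.1 σ τ 1

theorem apply_mul_one_ne (hκ : IsKoszul d κ) {σ τ : Perm (Fin n)} (h : κ σ τ ≠ κ σ 1) :
    κ (σ * τ) 1 ≠ κ σ 1 * κ τ 1 := by
  rw [hκ.apply_mul_one]
  exact fun h' => h (mul_right_cancel h')

theorem swap_zero_one (hκ : IsKoszul d κ) (h : 1 < n) (ρ : Perm (Fin n)) :
    κ (swap ⟨0, Nat.lt_of_succ_lt h⟩ ⟨1, h⟩) ρ =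
      (-1) ^ (d (ρ⁻¹ ⟨0, Nat.lt_of_succ_lt h⟩) * d (ρ⁻¹ ⟨1, h⟩)) :=
  hκ.2 0 h ρ

end IsKoszul

theorem koszul_not_hom_of_mixed_parity_general (n : ℕ) (d : Fin n → ℤ)
    (hodd : ∃ i j : Fin n, i ≠ j ∧ Odd (d i) ∧ Odd (d j))
    (heven : ∃ k : Fin n, Even (d k))
    (κ : Equiv.Perm (Fin n) → Equiv.Perm (Fin n) → ℤˣ) (hκ : IsKoszul d κ) :
    ∃ σ τ : Equiv.Perm (Fin n), κ (σ * τ) 1 ≠ κ σ 1 * κ τ 1 := by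
  have h1 : 1 < n := by
    obtain ⟨i, j, hij, -⟩ := hodd
    have := Fin.val_ne_of_ne hij
    omega
  set a : Fin n := ⟨0, Nat.lt_of_succ_lt h1⟩
  set b : Fin n := ⟨1, h1⟩
  obtain ⟨x, y, hxy, hparity⟩ := exists_ne_even_mul_iff_not hodd heven a b
  obtain ⟨ρ, hρx, hρy⟩ := MulAction.is_two_pretransitive_iff.mp
    (Perm.isMultiplyPretransitive (Fin n) 2) hxy (show a ≠ b by simp [a, b, Fin.ext_iff])
  refine ⟨swap a b, ρ, hκ.apply_mul_one_ne ?_⟩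
  rw [hκ.swap_zero_one h1, hκ.swap_zero_one h1, Ne, units_neg_one_zpow_eq_iff]
  rw [Perm.smul_def] at hρx hρy
  rw [Perm.inv_eq_iff_eq.mpr hρx.symm, Perm.inv_eq_iff_eq.mpr hρy.symm, inv_one,
    Perm.one_apply, Perm.one_apply, hparity]
  tauto

theorem koszul_not_hom_of_mixed_parity (n : ℕ) (hn : 3 ≤ n) (d : Fin n → ℤ)
    (hodd : ∃ i j : Fin n, i ≠ j ∧ Odd (d i) ∧ Odd (d j))
    (heven : ∃ k : Fin n, Even (d k))
    (κ : Equiv.Perm (Fin n) → Equiv.Perm (Fin n) → ℤˣ) (hκ : IsKoszul d κ) :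
    ∃ σ τ : Equiv.Perm (Fin n), κ (σ * τ) 1 ≠ κ σ 1 * κ τ 1 :=
  koszul_not_hom_of_mixed_parity_general n d hodd heven κ hκ
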